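/- arXiv:2504.09735 — 2 statements merged into one kernel-verified Lean document; each statement's English description precedes it below -/
import Mathlib

section
/- For all λ, ε ∈ ℝ, every function f : ℂ∖{0} → ℂ, every z ∈ ℂ∖{0}, and all nonzero s, u ∈ ℂ, the following operator identities hold, where (rf)(z) := f(1/z): (π_{λ,ε}(K⁻¹)f)(z) = (π_{λ,−ε}(K)(rf))(1/z); (π_{λ,ε}(F)f)(z) = (π_{λ,−ε}(E)(rf))(1/z); (π_{λ,ε}(E)f)(z) = (π_{λ,−ε}(F)(rf))(1/z); and (π_{λ,ε}(Ỹ_{s,u})f)(z) = (π_{λ,−ε}(Y_{s,u})(rf))(1/z). (That is, the involution ϑ of U_q(sl₂) with ϑ(K)=K⁻¹, ϑ(E)=F, ϑ(F)=E satisfies π_{λ,ε}(ϑ(X)) = r ∘ π_{λ,−ε}(X) ∘ r on these elements, and ϑ(Y_{s,u}) = Ỹ_{s,u}.) -/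
noncomputable section

open Complex

/-- `q^{iλ} := exp(iλ · log q)`. -/
def qil (q lam : ℝ) : ℂ := Complex.exp (Complex.I * lam * Real.log q)

/-- the real power `q^a` viewed as a complex number. -/
def qr (q a : ℝ) : ℂ := ((q ^ a : ℝ) : ℂ)

/-- action of `K` in the representation `π_{λ,ε}`. -/
def piK (q : ℝ) (eps : ℝ) (f : ℂ → ℂ) (z : ℂ) : ℂ := qr q eps * f (q * z)

/-- action of `K⁻¹` in the representation `π_{λ,ε}`. -/
def piKinv (q : ℝ) (eps : ℝ) (f : ℂ → ℂ) (z : ℂ) : ℂ := qr q (-eps) * f (z / q)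

/-- action of `E` in the representation `π_{λ,ε}`. -/
def piE (q lam eps : ℝ) (f : ℂ → ℂ) (z : ℂ) : ℂ :=
  z * (qr q (-(1/2) - eps) * (qil q lam)⁻¹ * f (z / q)
      - qr q (1/2 + eps) * qil q lam * f ((q : ℂ) * z)) / ((q : ℂ)⁻¹ - (q : ℂ))

/-- action of `F` in the representation `π_{λ,ε}`. -/
def piF (q lam eps : ℝ) (f : ℂ → ℂ) (z : ℂ) : ℂ :=
  z⁻¹ * (qr q (-(1/2) + eps) * (qil q lam)⁻¹ * f ((q : ℂ) * z)
      - qr q (1/2 - eps) * qil q lam * f (z / q)) / ((q : ℂ)⁻¹ - (q : ℂ))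

/-- action of the twisted primitive element `Y_{s,u}` in the representation `π_{λ,ε}`. -/
def piY (q lam eps : ℝ) (s u : ℂ) (f : ℂ → ℂ) (z : ℂ) : ℂ :=
  qr q (2 * eps) *
      ((s + s⁻¹ - u * z * (q : ℂ) * qil q lam - u⁻¹ * z⁻¹ * (q : ℂ)⁻¹ * (qil q lam)⁻¹) /
        ((q : ℂ)⁻¹ - (q : ℂ))) * f ((q : ℂ) ^ 2 * z)
    + ((u * z * (qil q lam)⁻¹ + u⁻¹ * z⁻¹ * qil q lam - s - s⁻¹) / ((q : ℂ)⁻¹ - (q : ℂ))) * f z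

/-- action of the twisted primitive element `Ỹ_{s,u}` in the representation `π_{λ,ε}`. -/
def piYt (q lam eps : ℝ) (s u : ℂ) (f : ℂ → ℂ) (z : ℂ) : ℂ :=
  qr q (-(2 * eps)) *
      ((s + s⁻¹ - u⁻¹ * z * (q : ℂ)⁻¹ * (qil q lam)⁻¹ - u * z⁻¹ * (q : ℂ) * qil q lam) /
        ((q : ℂ)⁻¹ - (q : ℂ))) * f (z / (q : ℂ) ^ 2)
    + ((u⁻¹ * z * qil q lam + u * z⁻¹ * (qil q lam)⁻¹ - s - s⁻¹) / ((q : ℂ)⁻¹ - (q : ℂ))) * f z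

/-- The involution `ϑ` of `U_q(sl₂)` with `ϑ(K)=K⁻¹`, `ϑ(E)=F`, `ϑ(F)=E` satisfies
`π_{λ,ε}(ϑ(X)) = r ∘ π_{λ,−ε}(X) ∘ r` on `K⁻¹, E, F` and `ϑ(Y_{s,u}) = Ỹ_{s,u}`,
where `(rf)(z) = f(1/z)`. -/
theorem stmt0 (q : ℝ) (hq0 : 0 < q) (hq1 : q < 1) (lam eps : ℝ) (f : ℂ → ℂ)
    (z : ℂ) (hz : z ≠ 0) (s u : ℂ) (hs : s ≠ 0) (hu : u ≠ 0) :
    piKinv q eps f z = piK q (-eps) (fun w => f w⁻¹) z⁻¹ ∧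
    piF q lam eps f z = piE q lam (-eps) (fun w => f w⁻¹) z⁻¹ ∧
    piE q lam eps f z = piF q lam (-eps) (fun w => f w⁻¹) z⁻¹ ∧
    piYt q lam eps s u f z = piY q lam (-eps) s u (fun w => f w⁻¹) z⁻¹ := by
  have hqc : (q : ℂ) ≠ 0 := by exact_mod_cast hq0.ne'
  have h1 : ((q : ℂ) * z⁻¹)⁻¹ = z / q := by field_simp
  have h2 : ((q : ℂ)^2 * z⁻¹)⁻¹ = z / (q : ℂ)^2 := by field_simp
  have h3 : (z⁻¹ / (q : ℂ))⁻¹ = (q : ℂ) * z := by field_simp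
  have h4 : (z⁻¹ : ℂ)⁻¹ = z := inv_inv z
  refine ⟨?_, ?_, ?_, ?_⟩
  · simp only [piKinv, piK, h1, neg_neg]
  · simp only [piF, piE, h1, h3, neg_neg]
    ring
  · simp only [piE, piF, h1, h3, h4, neg_neg]
    rw [show -(1/2 : ℝ) + -eps = -(1/2) - eps by ring,
        show (1/2 : ℝ) - -eps = 1/2 + eps by ring]
  · simp only [piYt, piY, h2, h4, neg_neg]
    ring

end
end

section
/- Let λ, ε ∈ ℝ and let f, g : ℂ∖{0} → ℂ be analytic on an open neighbourhood of the closed annulus {z : q ≤ |z| ≤ 1/q}. Then, with ⟨f,g⟩ := (2πi)⁻¹ ∮_{|z|=1} f(z)·conj(g(1/conj(z))) dz/z (positively oriented unit circle), one has: ⟨π_{λ,ε}(K)f, g⟩ = ⟨f, π_{λ,ε}(K)g⟩; ⟨π_{λ,ε}(K⁻¹)f, g⟩ = ⟨f, π_{λ,ε}(K⁻¹)g⟩; ⟨π_{λ,ε}(E)f, g⟩ = −⟨f, π_{λ,ε}(F)g⟩; and ⟨π_{λ,ε}(F)f, g⟩ = −⟨f, π_{λ,ε}(E)g⟩. (These are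 the adjointness relations ⟨π(X)f,g⟩ = ⟨f,π(X*)g⟩ for the *-structure K* = K, E* = −F, F* = −E.) -/
/-!
Write `g♯ z = conj (g (1 / conj z))` (`schwarzReflect g`), so that `⟨f, g⟩` is the mean of
`f · g♯` over the unit circle. Each of `π(K)`, `π(K⁻¹)`, `π(E)`, `π(F)` is a linear combination
of the operators `shiftMul c n : f ↦ z ^ n * f (c * z)` with `c ∈ {q, q⁻¹}`, `n ∈ {0, ±1}`, and
the adjoint of such an operator is `c ^ (-n)` times `f ↦ z ^ (-n) * f (c * z)`: after the
substitution `z ↦ c z` the two integrands agree, and because both functions are holomorphic on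
the annulus between the radii `c` and `1`, Cauchy's theorem moves the contour `|z| = c` back to
the unit circle. What remains are identities between the coefficients, using
`conj (q ^ (iλ)) = q ^ (-iλ)`.
-/

noncomputable section

open Complex ComplexConjugate

/-- the pairing `⟨f,g⟩ = (2πi)⁻¹ ∮_{|z|=1} f(z) conj(g(1/conj z)) dz/z`. -/
def pairing (f g : ℂ → ℂ) : ℂ :=
  (2 * (Real.pi : ℂ) * Complex.I)⁻¹ * ∮ z in C(0, (1:ℝ)), (f z * conj (g ((conj z)⁻¹))) / z

open Metric Set

theorem circleIntegral_comp_ofReal_mul_div_self {a : ℝ} (ha : a ≠ 0) (h : ℂ → ℂ) :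
    (∮ z in C(0, 1), h (a * z) / z) = ∮ z in C(0, a), h z / z := by
  refine intervalIntegral.integral_congr fun θ _ => ?_
  have hmap : (a : ℂ) * circleMap 0 1 θ = circleMap 0 a θ := by simp [circleMap]
  simp only [deriv_circleMap, smul_eq_mul, hmap]
  field_simp [circleMap_ne_center one_ne_zero, circleMap_ne_center ha]

theorem circleIntegral_eq_of_differentiableAt_annulus {r R : ℝ} (hr : 0 < r) (hrR : r ≤ R)
    {h : ℂ → ℂ} (hd : ∀ z : ℂ, r ≤ ‖z‖ → ‖z‖ ≤ R → DifferentiableAt ℂ h z) :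
    (∮ z in C(0, R), h z) = ∮ z in C(0, r), h z := by
  refine circleIntegral_eq_of_differentiable_on_annulus_off_countable hr hrR countable_empty
    (fun z hz => (hd z ?_ ?_).continuousAt.continuousWithinAt) fun z hz => hd z ?_ ?_
  all_goals simp_all [dist_zero_right, le_of_lt]

theorem circleIntegral_comp_ofReal_mul_div_self_of_differentiableAt {a : ℝ} (ha : 0 < a)
    {h : ℂ → ℂ} (hd : ∀ z : ℂ, min a 1 ≤ ‖z‖ → ‖z‖ ≤ max a 1 → DifferentiableAt ℂ h z) :
    (∮ z in C(0, 1), h (a * z) / z) = ∮ z in C(0, 1), h z / z := by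
  have hdiv : ∀ z : ℂ, min a 1 ≤ ‖z‖ → ‖z‖ ≤ max a 1 →
      DifferentiableAt ℂ (fun w => h w / w) z :=
    fun z h1 h2 => (hd z h1 h2).div differentiableAt_id
      (norm_pos_iff.1 ((lt_min ha one_pos).trans_le h1))
  rw [circleIntegral_comp_ofReal_mul_div_self ha.ne']
  rcases le_total a 1 with hle | hle
  · simp only [min_eq_left hle, max_eq_right hle] at hdiv
    exact (circleIntegral_eq_of_differentiableAt_annulus ha hle hdiv).symm
  · simp only [min_eq_right hle, max_eq_left hle] at hdiv
    exact circleIntegral_eq_of_differentiableAt_annulus one_pos hle hdiv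

def schwarzReflect (g : ℂ → ℂ) (z : ℂ) : ℂ := conj (g (conj z)⁻¹)

theorem DifferentiableAt.schwarzReflect {g : ℂ → ℂ} {z : ℂ} (hz : z ≠ 0)
    (hg : DifferentiableAt ℂ g (conj z)⁻¹) : DifferentiableAt ℂ (schwarzReflect g) z := by
  have hinv : DifferentiableAt ℂ (g ∘ (·⁻¹)) (conj z) :=
    hg.comp _ (differentiableAt_inv ((map_ne_zero conj).2 hz))
  have h := hinv.conj_conj
  rwa [Complex.conj_conj] at h

theorem ContinuousOn.schwarzReflect {g : ℂ → ℂ} (hg : ContinuousOn g (sphere 0 1)) :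
    ContinuousOn (schwarzReflect g) (sphere 0 1) := by
  refine continuous_conj.comp_continuousOn (hg.comp ?_ fun z hz => ?_)
  · exact continuous_conj.continuousOn.inv₀ fun z hz =>
      (map_ne_zero conj).2 (ne_of_mem_sphere hz one_ne_zero)
  · simpa using hz

theorem pairing_eq (f g : ℂ → ℂ) :
    pairing f g = (2 * (Real.pi : ℂ) * I)⁻¹ * ∮ z in C(0, 1), f z * schwarzReflect g z / z :=
  rfl

theorem pairing_const_mul_left (a : ℂ) (u g : ℂ → ℂ) :
    pairing (fun z => a * u z) g = a * pairing u g := by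
  unfold pairing
  rw [mul_left_comm, ← smul_eq_mul a, ← circleIntegral.integral_smul]
  simp only [smul_eq_mul, mul_div_assoc, mul_assoc]

theorem pairing_const_mul_right (a : ℂ) (f g : ℂ → ℂ) :
    pairing f (fun z => a * g z) = conj a * pairing f g := by
  unfold pairing
  rw [mul_left_comm, ← smul_eq_mul (conj a), ← circleIntegral.integral_smul]
  simp only [smul_eq_mul, map_mul, mul_div_assoc, mul_left_comm]

theorem circleIntegrable_mul_schwarzReflect_div {u g : ℂ → ℂ}
    (hu : ContinuousOn u (sphere 0 1)) (hg : ContinuousOn g (sphere 0 1)) :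
    CircleIntegrable (fun z => u z * schwarzReflect g z / z) 0 1 :=
  ((hu.mul hg.schwarzReflect).div continuousOn_id fun _ hz => ne_of_mem_sphere hz one_ne_zero
    ).circleIntegrable zero_le_one

theorem pairing_sub_left {u v g : ℂ → ℂ} (hu : ContinuousOn u (sphere 0 1))
    (hv : ContinuousOn v (sphere 0 1)) (hg : ContinuousOn g (sphere 0 1)) :
    pairing (fun z => u z - v z) g = pairing u g - pairing v g := by
  rw [pairing_eq, pairing_eq, pairing_eq, ← mul_sub,
    ← circleIntegral.integral_sub (circleIntegrable_mul_schwarzReflect_div hu hg)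
    (circleIntegrable_mul_schwarzReflect_div hv hg)]
  simp only [sub_mul, sub_div]

theorem pairing_sub_right {f u v : ℂ → ℂ} (hf : ContinuousOn f (sphere 0 1))
    (hu : ContinuousOn u (sphere 0 1)) (hv : ContinuousOn v (sphere 0 1)) :
    pairing f (fun z => u z - v z) = pairing f u - pairing f v := by
  rw [pairing_eq, pairing_eq, pairing_eq, ← mul_sub,
    ← circleIntegral.integral_sub (circleIntegrable_mul_schwarzReflect_div hf hu)
    (circleIntegrable_mul_schwarzReflect_div hf hv)]
  simp only [schwarzReflect, map_sub, mul_sub, sub_div]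

theorem pairing_linear_left (a b : ℂ) {u v g : ℂ → ℂ} (hu : ContinuousOn u (sphere 0 1))
    (hv : ContinuousOn v (sphere 0 1)) (hg : ContinuousOn g (sphere 0 1)) :
    pairing (fun z => a * u z - b * v z) g = a * pairing u g - b * pairing v g := by
  rw [pairing_sub_left (hu.const_mul a) (hv.const_mul b) hg, pairing_const_mul_left,
    pairing_const_mul_left]

theorem pairing_linear_right (a b : ℂ) {f u v : ℂ → ℂ} (hf : ContinuousOn f (sphere 0 1))
    (hu : ContinuousOn u (sphere 0 1)) (hv : ContinuousOn v (sphere 0 1)) :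
    pairing f (fun z => a * u z - b * v z) = conj a * pairing f u - conj b * pairing f v := by
  rw [pairing_sub_right hf (hu.const_mul a) (hv.const_mul b), pairing_const_mul_right,
    pairing_const_mul_right]

def shiftMul (c : ℝ) (n : ℤ) (f : ℂ → ℂ) (z : ℂ) : ℂ := z ^ n * f (c * z)

theorem ContinuousOn.shiftMul {c : ℝ} (hc : 0 < c) (n : ℤ) {f : ℂ → ℂ}
    (hf : ContinuousOn f (sphere 0 c)) : ContinuousOn (shiftMul c n f) (sphere 0 1) := by
  refine (continuousOn_id.zpow₀ n fun z hz => Or.inl (ne_of_mem_sphere hz one_ne_zero)).mul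
    (hf.comp (continuousOn_const.mul continuousOn_id) fun z hz => ?_)
  simp_all [abs_of_pos hc]

theorem norm_ofReal_mul_inv_conj_mem_annulus {c : ℝ} (hc : 0 < c) {w : ℂ}
    (h1 : min c 1 ≤ ‖w‖) (h2 : ‖w‖ ≤ max c 1) :
    min c 1 ≤ ‖c * (conj w)⁻¹‖ ∧ ‖c * (conj w)⁻¹‖ ≤ max c 1 := by
  have hw : 0 < ‖w‖ := (lt_min hc one_pos).trans_le h1
  have hmm := min_mul_max c 1
  rw [norm_mul, norm_inv, norm_conj, norm_real, Real.norm_of_nonneg hc.le, ← div_eq_mul_inv,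
    le_div_iff₀ hw, div_le_iff₀ hw]
  constructor <;> nlinarith [min_le_max (a := c) (b := 1), lt_min hc one_pos]

theorem pairing_shiftMul {c : ℝ} (hc : 0 < c) (n : ℤ) {f g : ℂ → ℂ}
    (hf : ∀ z : ℂ, min c 1 ≤ ‖z‖ → ‖z‖ ≤ max c 1 → DifferentiableAt ℂ f z)
    (hg : ∀ z : ℂ, min c 1 ≤ ‖z‖ → ‖z‖ ≤ max c 1 → DifferentiableAt ℂ g z) :
    pairing (shiftMul c n f) g = (c : ℂ) ^ (-n) * pairing f (shiftMul c (-n) g) := by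
  have hc' : (c : ℂ) ≠ 0 := ofReal_ne_zero.2 hc.ne'
  set H : ℂ → ℂ := fun w => (c : ℂ) ^ (-n) * (f w * schwarzReflect (shiftMul c (-n) g) w)
  have hH : ∀ w : ℂ, min c 1 ≤ ‖w‖ → ‖w‖ ≤ max c 1 → DifferentiableAt ℂ H w := by
    intro w h1 h2
    have hw : w ≠ 0 := norm_pos_iff.1 ((lt_min hc one_pos).trans_le h1)
    have hw' : (conj w)⁻¹ ≠ 0 := inv_ne_zero ((map_ne_zero conj).2 hw)
    obtain ⟨h1', h2'⟩ := norm_ofReal_mul_inv_conj_mem_annulus hc h1 h2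
    refine ((hf w h1 h2).mul (DifferentiableAt.schwarzReflect hw ?_)).const_mul _
    exact (differentiableAt_zpow.2 (Or.inl hw')).mul
      ((hg _ h1' h2').comp _ (differentiableAt_id.const_mul _))
  unfold pairing
  rw [mul_left_comm]
  congr 1
  calc (∮ z in C(0, 1), shiftMul c n f z * conj (g (conj z)⁻¹) / z)
      = ∮ z in C(0, 1), H (c * z) / z := by
        refine circleIntegral.integral_congr zero_le_one fun z _ => ?_
        have harg : (c : ℂ) * (conj (c * z))⁻¹ = (conj z)⁻¹ := by
          rw [map_mul, conj_ofReal, mul_inv, ← mul_assoc, mul_inv_cancel₀ hc', one_mul]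
        simp only [H, shiftMul, schwarzReflect]
        rw [harg, map_mul, map_zpow₀, map_inv₀, conj_conj, inv_zpow', neg_neg, mul_zpow,
          zpow_neg]
        field_simp
    _ = ∮ z in C(0, 1), H z / z :=
        circleIntegral_comp_ofReal_mul_div_self_of_differentiableAt hc hH
    _ = _ := by
        rw [← smul_eq_mul, ← circleIntegral.integral_smul]
        simp only [H, schwarzReflect, smul_eq_mul, mul_div_assoc]

theorem conj_qr (q a : ℝ) : conj (qr q a) = qr q a := conj_ofReal _

theorem conj_qil (q lam : ℝ) : conj (qil q lam) = (qil q lam)⁻¹ := by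
  rw [qil, ← exp_conj, ← exp_neg, map_mul, map_mul, conj_I, conj_ofReal, conj_ofReal]
  ring_nf

theorem qr_add_one {q : ℝ} (hq : 0 < q) (a : ℝ) : qr q (a + 1) = qr q a * q := by
  rw [qr, Real.rpow_add_one hq.ne', ofReal_mul]; rfl

theorem piK_eq_shiftMul (q eps : ℝ) (f : ℂ → ℂ) :
    piK q eps f = fun z => qr q eps * shiftMul q 0 f z := by
  ext z
  simp [piK, shiftMul]

theorem piKinv_eq_shiftMul (q eps : ℝ) (f : ℂ → ℂ) :
    piKinv q eps f = fun z => qr q (-eps) * shiftMul q⁻¹ 0 f z := by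
  ext z
  simp [piKinv, shiftMul, div_eq_inv_mul]

theorem piE_eq_shiftMul (q lam eps : ℝ) (f : ℂ → ℂ) :
    piE q lam eps f = fun z =>
      qr q (-(1/2) - eps) * (qil q lam)⁻¹ / ((q : ℂ)⁻¹ - q) * shiftMul q⁻¹ 1 f z
        - qr q (1/2 + eps) * qil q lam / ((q : ℂ)⁻¹ - q) * shiftMul q 1 f z := by
  ext z
  simp only [piE, shiftMul, zpow_one, ofReal_inv, div_eq_inv_mul]
  ring

theorem piF_eq_shiftMul (q lam eps : ℝ) (f : ℂ → ℂ) :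
    piF q lam eps f = fun z =>
      qr q (-(1/2) + eps) * (qil q lam)⁻¹ / ((q : ℂ)⁻¹ - q) * shiftMul q (-1) f z
        - qr q (1/2 - eps) * qil q lam / ((q : ℂ)⁻¹ - q) * shiftMul q⁻¹ (-1) f z := by
  ext z
  simp only [piF, shiftMul, zpow_neg_one, ofReal_inv, div_eq_inv_mul]
  ring

section Annulus

variable {q : ℝ} (hq0 : 0 < q) {f g : ℂ → ℂ}
  (hf : AnalyticOnNhd ℂ f {z : ℂ | q ≤ ‖z‖ ∧ ‖z‖ ≤ q⁻¹})
include hq0 hf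

theorem continuousOn_shiftMul_of_annulus {c : ℝ} (hqc : q ≤ c) (hcq : c ≤ q⁻¹) (n : ℤ) :
    ContinuousOn (shiftMul c n f) (sphere 0 1) :=
  (hf.continuousOn.mono fun z hz => by simp_all).shiftMul (hq0.trans_le hqc) n

theorem pairing_shiftMul_of_annulus {c : ℝ} (hq1 : q ≤ 1) (hqc : q ≤ c) (hcq : c ≤ q⁻¹)
    (hg : AnalyticOnNhd ℂ g {z : ℂ | q ≤ ‖z‖ ∧ ‖z‖ ≤ q⁻¹}) (n : ℤ) :
    pairing (shiftMul c n f) g = (c : ℂ) ^ (-n) * pairing f (shiftMul c (-n) g) := by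
  have hsub : ∀ z : ℂ, min c 1 ≤ ‖z‖ → ‖z‖ ≤ max c 1 → q ≤ ‖z‖ ∧ ‖z‖ ≤ q⁻¹ :=
    fun z h1 h2 => ⟨(le_min hqc hq1).trans h1, h2.trans (max_le hcq ((one_le_inv₀ hq0).2 hq1))⟩
  exact pairing_shiftMul (hq0.trans_le hqc) n
    (fun z h1 h2 => (hf z (hsub z h1 h2)).differentiableAt)
    fun z h1 h2 => (hg z (hsub z h1 h2)).differentiableAt

end Annulus

/-- Adjointness relations `⟨π(X)f, g⟩ = ⟨f, π(X*)g⟩` for the `*`-structure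
`K* = K`, `(K⁻¹)* = K⁻¹`, `E* = −F`, `F* = −E`, for functions analytic on a
neighbourhood of the closed annulus `{z : q ≤ |z| ≤ 1/q}`. -/
theorem stmt1 (q : ℝ) (hq0 : 0 < q) (hq1 : q < 1) (lam eps : ℝ) (f g : ℂ → ℂ)
    (hf : AnalyticOnNhd ℂ f {z : ℂ | q ≤ ‖z‖ ∧ ‖z‖ ≤ q⁻¹})
    (hg : AnalyticOnNhd ℂ g {z : ℂ | q ≤ ‖z‖ ∧ ‖z‖ ≤ q⁻¹}) :
    pairing (piK q eps f) g = pairing f (piK q eps g) ∧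
    pairing (piKinv q eps f) g = pairing f (piKinv q eps g) ∧
    pairing (piE q lam eps f) g = -pairing f (piF q lam eps g) ∧
    pairing (piF q lam eps f) g = -pairing f (piE q lam eps g) := by
  have hq1inv : 1 ≤ q⁻¹ := (one_le_inv₀ hq0).2 hq1.le
  have hq : q ≤ q⁻¹ := hq1.le.trans hq1inv
  have hf1 : ContinuousOn f (sphere 0 1) := hf.continuousOn.mono fun z hz => by simp_all [hq1.le]
  have hg1 : ContinuousOn g (sphere 0 1) := hg.continuousOn.mono fun z hz => by simp_all [hq1.le]
  have hf_q := continuousOn_shiftMul_of_annulus hq0 hf le_rfl hq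
  have hf_qinv := continuousOn_shiftMul_of_annulus hq0 hf hq le_rfl
  have hg_q := continuousOn_shiftMul_of_annulus hq0 hg le_rfl hq
  have hg_qinv := continuousOn_shiftMul_of_annulus hq0 hg hq le_rfl
  have hadj_q := pairing_shiftMul_of_annulus hq0 hf hq1.le le_rfl hq hg
  have hadj_qinv := pairing_shiftMul_of_annulus hq0 hf hq1.le hq le_rfl hg
  have hqC : (q : ℂ) ≠ 0 := ofReal_ne_zero.2 hq0.ne'
  have hminus : qr q (1/2 - eps) = qr q (-(1/2) - eps) * q := by
    rw [← qr_add_one hq0]; congr 1; ring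
  have hplus : qr q (1/2 + eps) = qr q (-(1/2) + eps) * q := by
    rw [← qr_add_one hq0]; congr 1; ring
  refine ⟨?_, ?_, ?_, ?_⟩
  · rw [piK_eq_shiftMul, piK_eq_shiftMul, pairing_const_mul_left, pairing_const_mul_right,
      hadj_q 0, conj_qr, neg_zero, zpow_zero, one_mul]
  · rw [piKinv_eq_shiftMul, piKinv_eq_shiftMul, pairing_const_mul_left, pairing_const_mul_right,
      hadj_qinv 0, conj_qr, neg_zero, zpow_zero, one_mul]
  · rw [piE_eq_shiftMul, piF_eq_shiftMul, pairing_linear_left _ _ (hf_qinv 1) (hf_q 1) hg1,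
      pairing_linear_right _ _ hf1 (hg_q (-1)) (hg_qinv (-1)), hadj_q 1, hadj_qinv 1]
    simp only [map_div₀, map_mul, map_sub, map_inv₀, conj_qr, conj_qil, conj_ofReal, ofReal_inv,
      zpow_neg_one, inv_inv, hminus, hplus]
    field_simp
    ring
  · rw [piF_eq_shiftMul, piE_eq_shiftMul, pairing_linear_left _ _ (hf_q (-1)) (hf_qinv (-1)) hg1,
      pairing_linear_right _ _ hf1 (hg_qinv 1) (hg_q 1), hadj_q (-1), hadj_qinv (-1), neg_neg]
    simp only [map_div₀, map_mul, map_sub, map_inv₀, conj_qr, conj_qil, conj_ofReal, ofReal_inv,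
      zpow_one, inv_inv, hminus, hplus]
    field_simp
    ring

end
end
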